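/- Let d be an (⊙,∨)-derivation on the standard MV-algebra I = [0,1] such that d(1) ∈ {0,1} (d(1) is an idempotent of I). Then the following are equivalent: (1) d is isotone (x ≤ y implies d(x) ≤ d(y)); (2) d(x) ≤ d(1) for every x ∈ I; (3) d(x) = d(1) ⊙ x for every x ∈ I; (4) d(min(x,y)) = min(d(x), d(y)) for all x, y ∈ I; (5) d(max(x,y)) = max(d(x), d(y)) for all x, y ∈ I. -/
import Mathlib


/-- Łukasiewicz strong conjunction `x ⊙ y = max 0 (x + y - 1)` on the unit interval. -/
noncomputable def od (x y : unitInterval) : unitInterval :=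
  ⟨max 0 (x.1 + y.1 - 1),
    ⟨le_max_left _ _, max_le zero_le_one (by have := x.2.2; have := y.2.2; linarith)⟩⟩

/-- Łukasiewicz strong disjunction `x ⊕ y = min 1 (x + y)` on the unit interval. -/
noncomputable def op (x y : unitInterval) : unitInterval :=
  ⟨min 1 (x.1 + y.1),
    ⟨le_min zero_le_one (by have := x.2.1; have := y.2.1; linarith), min_le_left _ _⟩⟩

/-- `d` is an `(⊙,∨)`-derivation on the standard MV-algebra `[0,1]`:
`d (x ⊙ y) = (d x ⊙ y) ∨ (x ⊙ d y)` for all `x, y`. -/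
def IsOdotDer (d : unitInterval → unitInterval) : Prop :=
  ∀ x y : unitInterval, d (od x y) = max (od (d x) y) (od x (d y))

lemma od_one_right (x : unitInterval) : od x 1 = x := by
  apply Subtype.ext
  simp only [od, Set.Icc.coe_one]
  have := x.2.1
  rw [max_eq_right] <;> linarith

lemma od_zero_left (x : unitInterval) : od 0 x = 0 := by
  apply Subtype.ext
  simp only [od, Set.Icc.coe_zero]
  have := x.2.2
  rw [max_eq_left] <;> linarith

lemma od_one_left (x : unitInterval) : od 1 x = x := by
  apply Subtype.ext
  simp only [od, Set.Icc.coe_one]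
  have := x.2.1
  rw [max_eq_right] <;> linarith

lemma od_zero_right (x : unitInterval) : od x 0 = 0 := by
  apply Subtype.ext
  simp only [od, Set.Icc.coe_zero]
  have := x.2.2
  rw [max_eq_left] <;> linarith

/-- If `d 1 = 1` then an `(⊙,∨)`-derivation is the identity. -/
lemma der_one_eq_id (d : unitInterval → unitInterval) (hd : IsOdotDer d)
    (h1 : d 1 = 1) : ∀ x, d x = x := by
  have hzero : d 0 = 0 := by
    have := hd 0 0
    rwa [od_zero_left, od_zero_right, od_zero_left, max_self] at this
  intro x
  -- lower bound : x ≤ d x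
  have hlow : x ≤ d x := by
    have := hd x 1
    rw [od_one_right, od_one_right, h1, od_one_right] at this
    rw [this]
    exact le_max_right _ _
  -- upper bound, using y = symm x
  have hup : d x ≤ x := by
    have hx0 : od x (unitInterval.symm x) = 0 := by
      apply Subtype.ext
      simp only [od, unitInterval.coe_symm_eq, Set.Icc.coe_zero]
      rw [max_eq_left]; linarith
    have h := hd x (unitInterval.symm x)
    rw [hx0, hzero] at h
    have h2 : od (d x) (unitInterval.symm x) ≤ (0 : unitInterval) :=
      (le_max_left _ _).trans_eq h.symm
    have h3 : ((od (d x) (unitInterval.symm x)) : ℝ) ≤ 0 := h2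
    simp only [od, unitInterval.coe_symm_eq] at h3
    have h4 : (d x : ℝ) + (1 - (x : ℝ)) - 1 ≤ 0 := le_trans (le_max_right _ _) h3
    exact Subtype.coe_le_coe.mp (by linarith)
  exact le_antisymm hup hlow

/-- for an (⊙,∨)-derivation d with d 1 idempotent (d 1 ∈ {0,1}),
the following are equivalent: (1) d isotone; (2) d x ≤ d 1 for all x;
(3) d x = d 1 ⊙ x for all x; (4) d preserves min; (5) d preserves max. -/
theorem stmt12 (d : unitInterval → unitInterval) (hd : IsOdotDer d)
    (h1 : d 1 = 0 ∨ d 1 = 1) :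
    List.TFAE
      [∀ x y : unitInterval, x ≤ y → d x ≤ d y,
       ∀ x : unitInterval, d x ≤ d 1,
       ∀ x : unitInterval, d x = od (d 1) x,
       ∀ x y : unitInterval, d (min x y) = min (d x) (d y),
       ∀ x y : unitInterval, d (max x y) = max (d x) (d y)] := by
  rcases h1 with h1 | h1
  · -- d 1 = 0 case
    tfae_have 1 → 2
    | h, x => h x 1 unitInterval.le_one'
    tfae_have 2 → 3
    | h, x => by
      have hx0 : d x = 0 := le_antisymm (h1 ▸ h x) unitInterval.nonneg'
      rw [hx0, h1, od_zero_left]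
    tfae_have 3 → 4
    | h, x, y => by
      rw [h x, h y, h (min x y), h1, od_zero_left, od_zero_left, od_zero_left, min_self]
    tfae_have 4 → 5
    | h, x, y => by
      have hz : ∀ z : unitInterval, d z = 0 := by
        intro z
        have := h z 1
        rw [min_eq_left unitInterval.le_one', h1, min_eq_right unitInterval.nonneg'] at this
        exact this
      rw [hz, hz, hz, max_self]
    tfae_have 5 → 1
    | h, x, y, _ => by
      have hz : ∀ z : unitInterval, d z = 0 := by
        intro z
        have := h z 1
        rw [max_eq_right unitInterval.le_one', h1, max_eq_left unitInterval.nonneg'] at this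
        exact this.symm
      rw [hz, hz]
    tfae_finish
  · -- d 1 = 1 case : d is the identity, everything holds
    have hid := der_one_eq_id d hd h1
    apply List.tfae_of_forall True
    intro p hp
    simp only [List.mem_cons, List.not_mem_nil, or_false] at hp
    constructor
    · intro; trivial
    intro _
    rcases hp with rfl | rfl | rfl | rfl | rfl
    · intro x y hxy; rw [hid, hid]; exact hxy
    · intro x; rw [hid, hid]; exact unitInterval.le_one'
    · intro x; rw [hid, h1, od_one_left x]
    · intro x y; rw [hid, hid, hid]
    · intro x y; rw [hid, hid, hid]
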